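/- arXiv:1504.05600 — 2 statements merged into one kernel-verified Lean document; each statement's English description precedes it below -/
import Mathlib

section
/- Define g(m) := 6^{2/3} π^{1/3} m^{2/3} + 3^{2/3} · 2^{-1/3} · 10^{-1} · π^{-2/3} m^{5/3} for m > 0 (the energy of a single ball of volume m). The largest m > 0 for which g(m) ≤ 2·g(m/2) is m_{c1} = (40π/3)(2^{1/3} + 2^{-1/3} − 1); that is, g(m) ≤ 2 g(m/2) if and only if m ≤ m_{c1}. -/
open Real

/-- The energy of a single ball of volume `m` in ℝ³ (perimeter plus Coulomb self-energy). -/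
noncomputable def gBall (m : ℝ) : ℝ :=
  6 ^ ((2 : ℝ) / 3) * π ^ ((1 : ℝ) / 3) * m ^ ((2 : ℝ) / 3) +
    3 ^ ((2 : ℝ) / 3) * 2 ^ (-(1 : ℝ) / 3) * 10⁻¹ * π ^ (-(2 : ℝ) / 3) * m ^ ((5 : ℝ) / 3)

/-!
Up to a positive factor, `gBall m = 20π m^{2/3} + m^{5/3}`. Splitting into two halves multiplies
the perimeter term by `2^{1/3} > 1` and the Coulomb term by `2^{-2/3} < 1`, so after dividing by
`m^{2/3}` the comparison is linear in `m`: splitting does not pay iff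
`m ≤ 20π (2^{1/3} - 1) / (1 - 2^{-2/3})`, which `s³ = 2` for `s = 2^{1/3}` rewrites as the
stated threshold.
-/

lemma two_mul_half_rpow {m : ℝ} (hm : 0 ≤ m) (r : ℝ) :
    2 * (m / 2) ^ r = 2 ^ (1 - r) * m ^ r := by
  rw [div_rpow hm zero_le_two, rpow_sub two_pos, rpow_one]
  field_simp

lemma add_mul_rpow_le_add_mul_rpow_iff {a b a' b' m : ℝ} (p q : ℝ) (hm : 0 < m) (hb : b' < b) :
    a * m ^ p + b * m ^ q ≤ a' * m ^ p + b' * m ^ q ↔ m ^ (q - p) ≤ (a' - a) / (b - b') := by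
  have hmp : 0 < m ^ p := rpow_pos_of_pos hm p
  have hq : m ^ q = m ^ (q - p) * m ^ p := by rw [← rpow_add hm, sub_add_cancel]
  have hdiff : a' * m ^ p + b' * m ^ q - (a * m ^ p + b * m ^ q) =
      (a' - a - m ^ (q - p) * (b - b')) * m ^ p := by rw [hq]; ring
  rw [le_div_iff₀ (sub_pos.2 hb), ← sub_nonneg, hdiff, mul_nonneg_iff_of_pos_right hmp,
    sub_nonneg]

lemma gBall_eq_mul (m : ℝ) :
    gBall m = 3 ^ ((2 : ℝ) / 3) * 2 ^ (-(1 : ℝ) / 3) * 10⁻¹ * π ^ (-(2 : ℝ) / 3) *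
      (20 * π * m ^ ((2 : ℝ) / 3) + m ^ ((5 : ℝ) / 3)) := by
  have h6 : (6 : ℝ) ^ ((2 : ℝ) / 3) = 2 * 2 ^ (-(1 : ℝ) / 3) * 3 ^ ((2 : ℝ) / 3) := by
    rw [show (6 : ℝ) = 2 * 3 by norm_num, mul_rpow zero_le_two zero_le_three,
      show (2 : ℝ) / 3 = 1 + -(1 : ℝ) / 3 by norm_num, rpow_add two_pos, rpow_one]
  have hπ : π ^ ((1 : ℝ) / 3) = π * π ^ (-(2 : ℝ) / 3) := by
    rw [show (1 : ℝ) / 3 = 1 + -(2 : ℝ) / 3 by norm_num, rpow_add pi_pos, rpow_one]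
  rw [gBall, h6, hπ]
  ring

lemma splitting_threshold_eq :
    20 * π * (2 ^ ((1 : ℝ) / 3) - 1) / (1 - 2 ^ (-(2 : ℝ) / 3)) =
      40 * π / 3 * (2 ^ ((1 : ℝ) / 3) + 2 ^ (-(1 : ℝ) / 3) - 1) := by
  set s : ℝ := 2 ^ ((1 : ℝ) / 3)
  have hs0 : 0 < s := by positivity
  have hs3 : s ^ 3 = 2 := by
    rw [← rpow_natCast, ← rpow_mul zero_le_two]; norm_num
  have hs1 : 1 < s := by nlinarith [sq_nonneg (s - 1)]
  have hinv : (2 : ℝ) ^ (-(1 : ℝ) / 3) = s⁻¹ := by rw [neg_div, rpow_neg zero_le_two]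
  have hinv2 : (2 : ℝ) ^ (-(2 : ℝ) / 3) = s⁻¹ ^ 2 := by
    rw [← hinv, ← rpow_natCast, ← rpow_mul zero_le_two]; norm_num
  rw [hinv, hinv2]
  have hs2 : s ^ 2 - 1 ≠ 0 := by nlinarith
  field_simp
  linear_combination (20 * s - 20) * hs3

/-- A single ball of volume `m` has no more energy than two far-separated balls of volume
`m/2` each if and only if `m ≤ m_{c1} = (40π/3)(2^{1/3} + 2^{-1/3} − 1)`. -/
theorem ball_splitting_threshold (m : ℝ) (hm : 0 < m) :
    gBall m ≤ 2 * gBall (m / 2) ↔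
      m ≤ 40 * π / 3 * (2 ^ ((1 : ℝ) / 3) + 2 ^ (-(1 : ℝ) / 3) - 1) := by
  set κ : ℝ := 3 ^ ((2 : ℝ) / 3) * 2 ^ (-(1 : ℝ) / 3) * 10⁻¹ * π ^ (-(2 : ℝ) / 3)
  have hκ : 0 < κ := by positivity
  have hsplit : 2 * gBall (m / 2) = κ * (20 * π * 2 ^ ((1 : ℝ) / 3) * m ^ ((2 : ℝ) / 3) +
      2 ^ (-(2 : ℝ) / 3) * m ^ ((5 : ℝ) / 3)) := by
    have h2 := two_mul_half_rpow hm.le ((2 : ℝ) / 3)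
    have h5 := two_mul_half_rpow hm.le ((5 : ℝ) / 3)
    rw [show (1 : ℝ) - 2 / 3 = 1 / 3 by norm_num] at h2
    rw [show (1 : ℝ) - 5 / 3 = -2 / 3 by norm_num] at h5
    rw [gBall_eq_mul]
    linear_combination κ * 20 * π * h2 + κ * h5
  have hshrink : (2 : ℝ) ^ (-(2 : ℝ) / 3) < 1 :=
    rpow_lt_one_of_one_lt_of_neg one_lt_two (by norm_num)
  rw [gBall_eq_mul, hsplit, mul_le_mul_iff_right₀ hκ]
  nth_rw 1 [← one_mul (m ^ ((5 : ℝ) / 3))]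
  rw [add_mul_rpow_le_add_mul_rpow_iff _ _ hm hshrink, ← splitting_threshold_eq,
    show (5 : ℝ) / 3 - 2 / 3 = 1 by norm_num, rpow_one, mul_sub_one]
end

section
/- Let v : 𝕋_ℓ → ℝ be a C¹ function with |∇v(x)| ≤ (3/2)(v(x) + C) for all x and v + C ≥ 0. Suppose that for some ball B_r(x₀) with r ≤ 1/6 one has the average bound (1/|B_r|)∫_{B_r(x₀)} v dx ≤ C'. Then v(y) ≤ C + 2C' for all y ∈ B_r(x₀). -/
/-!
Let `y` maximize `v` on the closed ball and let `x₁` be a point of the ball where `v` is at most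
its average, so `v x₁ ≤ C'`. On the closed ball `‖∇v‖ ≤ (3/2)(v y + C)`, and `‖y - x₁‖ ≤ 2r ≤ 1/3`,
so the mean value inequality gives `v y - C' ≤ (1/2)(v y + C)`, i.e. `v y ≤ C + 2C'`.
-/

open MeasureTheory

local notation "E3" => EuclideanSpace ℝ (Fin 3)

theorem exists_le_of_setIntegral_le_mul_measureReal {α : Type*} [MeasurableSpace α]
    {μ : Measure α} {s : Set α} {f : α → ℝ} {c : ℝ} (hμ : μ s ≠ 0) (hμ₁ : μ s ≠ ⊤)
    (hf : IntegrableOn f s μ) (hint : ∫ x in s, f x ∂μ ≤ c * μ.real s) :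
    ∃ x ∈ s, f x ≤ c := by
  obtain ⟨x, hx, hle⟩ := exists_le_setAverage hμ hμ₁ hf
  have hvol : 0 < μ.real s := ENNReal.toReal_pos hμ hμ₁
  refine ⟨x, hx, hle.trans ?_⟩
  rw [setAverage_eq, smul_eq_mul, inv_mul_le_iff₀ hvol, mul_comm]
  exact hint

theorem IsMaxOn.sub_le_of_norm_fderiv_le_mul_add {E : Type*} [NormedAddCommGroup E]
    [NormedSpace ℝ E] {f : E → ℝ} {K : Set E} {a b d : ℝ} {x y : E} (hK : Convex ℝ K)
    (hf : ∀ z ∈ K, DifferentiableAt ℝ f z) (ha : 0 ≤ a)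
    (hgrad : ∀ z ∈ K, ‖fderiv ℝ f z‖ ≤ a * (f z + b)) (hmax : IsMaxOn f K y) (hy : y ∈ K)
    (hx : x ∈ K) (hd : ‖y - x‖ ≤ d) :
    f y - f x ≤ a * (f y + b) * d := by
  have hbound : ∀ z ∈ K, ‖fderiv ℝ f z‖ ≤ a * (f y + b) := fun z hz =>
    (hgrad z hz).trans (by gcongr; exact hmax hz)
  have hbound_nonneg : 0 ≤ a * (f y + b) := (norm_nonneg _).trans (hgrad y hy)
  calc f y - f x ≤ ‖f y - f x‖ := le_abs_self _
    _ ≤ a * (f y + b) * ‖y - x‖ := hK.norm_image_sub_le_of_norm_fderiv_le hf hbound hx hy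
    _ ≤ a * (f y + b) * d := by gcongr

theorem potential_upper_bound_from_average_general (v : E3 → ℝ) (C C' : ℝ)
    (hv : ContDiff ℝ 1 v)
    (hgrad : ∀ x, ‖fderiv ℝ v x‖ ≤ 3 / 2 * (v x + C))
    (x₀ : E3) (r : ℝ) (hr : 0 < r) (hr6 : r ≤ 1 / 6)
    (havg : ∫ x in Metric.ball x₀ r, v x ≤ C' * (volume (Metric.ball x₀ r)).toReal) :
    ∀ y ∈ Metric.ball x₀ r, v y ≤ C + 2 * C' := by
  obtain ⟨yM, hyM, hmax⟩ := (isCompact_closedBall x₀ r).exists_isMaxOn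
    ⟨x₀, Metric.mem_closedBall_self hr.le⟩ hv.continuous.continuousOn
  have hv_int : IntegrableOn v (Metric.ball x₀ r) :=
    (hv.continuous.continuousOn.integrableOn_compact (isCompact_closedBall x₀ r)).mono_set
      Metric.ball_subset_closedBall
  obtain ⟨x₁, hx₁, hx₁C'⟩ := exists_le_of_setIntegral_le_mul_measureReal
    (Metric.measure_ball_pos volume x₀ hr).ne' measure_ball_lt_top.ne hv_int havg
  have hx₁K := Metric.ball_subset_closedBall hx₁
  have hdist : ‖yM - x₁‖ ≤ 1 / 3 := by
    rw [← dist_eq_norm]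
    linarith [Metric.dist_le_diam_of_mem Metric.isBounded_closedBall hyM hx₁K,
      Metric.diam_closedBall hr.le (x := x₀)]
  have hosc : v yM - v x₁ ≤ 3 / 2 * (v yM + C) * (1 / 3) :=
    hmax.sub_le_of_norm_fderiv_le_mul_add (convex_closedBall x₀ r)
      (fun z _ => hv.differentiable one_ne_zero z) (by norm_num) (fun z _ => hgrad z) hyM hx₁K
      hdist
  intro y hy
  have hy_le : v y ≤ v yM := hmax (Metric.ball_subset_closedBall hy)
  linarith

/-- If `v` is `C¹` with `|∇v| ≤ (3/2)(v + C)` and `v + C ≥ 0` everywhere, and the average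
of `v` over a ball `B_r(x₀)` with `r ≤ 1/6` is at most `C'`, then `v ≤ C + 2C'` on
`B_r(x₀)`. -/
theorem potential_upper_bound_from_average (v : E3 → ℝ) (C C' : ℝ) (hC : 0 < C)
    (hv : ContDiff ℝ 1 v)
    (hgrad : ∀ x, ‖fderiv ℝ v x‖ ≤ 3 / 2 * (v x + C))
    (hpos : ∀ x, 0 ≤ v x + C)
    (x₀ : E3) (r : ℝ) (hr : 0 < r) (hr6 : r ≤ 1 / 6)
    (havg : ∫ x in Metric.ball x₀ r, v x ≤ C' * (volume (Metric.ball x₀ r)).toReal) :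
    ∀ y ∈ Metric.ball x₀ r, v y ≤ C + 2 * C' :=
  potential_upper_bound_from_average_general v C C' hv hgrad x₀ r hr hr6 havg
end
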